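/- If the basic intervals I_n(ε_1,…,ε_n) and I_m(η_1,…,η_m) are both full, then the concatenated basic interval I_{n+m}(ε_1,…,ε_n,η_1,…,η_m) is also full. -/

import Mathlib

open Filter MeasureTheory Set

/-- The β-transformation T_β(x) = βx − ⌊βx⌋. -/
noncomputable def betaT (β : ℝ) : ℝ → ℝ := fun x => β * x - ⌊β * x⌋

/-- The (i+1)-th digit of the β-expansion of x (0-indexed). -/
noncomputable def betaDigit (β x : ℝ) (i : ℕ) : ℤ := ⌊β * (betaT β)^[i] x⌋

/-- A finite word is β-admissible if some x ∈ [0,1) has β-expansion beginning with it. -/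
def IsAdmissibleWord (β : ℝ) (w : List ℤ) : Prop :=
  ∃ x ∈ Set.Ico (0:ℝ) 1, ∀ i (h : i < w.length), w.get ⟨i, h⟩ = betaDigit β x i

/-- An infinite sequence is β-admissible if it is the digit sequence of some x ∈ [0,1). -/
def IsAdmissibleSeq (β : ℝ) (e : ℕ → ℤ) : Prop :=
  ∃ x ∈ Set.Ico (0:ℝ) 1, ∀ i, e i = betaDigit β x i

/-- The basic interval (cylinder) of a word. -/
def cylinder (β : ℝ) (w : List ℤ) : Set ℝ :=
  {x | x ∈ Set.Ico (0:ℝ) 1 ∧ ∀ i (h : i < w.length), betaDigit β x i = w.get ⟨i, h⟩}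

/-- A basic interval is full if its length is β^{-n}. -/
def IsFull (β : ℝ) (w : List ℤ) : Prop :=
  volume (cylinder β w) = ENNReal.ofReal (1 / β ^ w.length)

-- The infinite β-expansion of 1: the periodic modification if the expansion of 1
-- terminates, and the expansion of 1 itself otherwise (0-indexed).
open Classical in
noncomputable def betaStar (β : ℝ) : ℕ → ℤ :=
  if h : ∃ n, betaDigit β 1 n ≠ 0 ∧ ∀ i, n < i → betaDigit β 1 i = 0 then
    fun i =>
      if i % (h.choose + 1) = h.choose then betaDigit β 1 h.choose - 1
      else betaDigit β 1 (i % (h.choose + 1))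
  else betaDigit β 1

/-- Strict lexicographic order on integer sequences. -/
def lexLt (a b : ℕ → ℤ) : Prop := ∃ n, (∀ i, i < n → a i = b i) ∧ a n < b n

/-- l_n(β): the length of the longest run of zeros following the n-th digit
(1-indexed position n) in the infinite β-expansion of 1. -/
noncomputable def zeroRunLen (β : ℝ) (n : ℕ) : ℕ∞ :=
  ⨆ k ∈ {k : ℕ | ∀ j, j < k → betaStar β (n + j) = 0}, (k : ℕ∞)

/-- A₀: the set of bases β > 1 with bounded zero-runs in the expansion of 1. -/
def A0 : Set ℝ := {β | 1 < β ∧ ∃ C : ℕ, ∀ n, 1 ≤ n → zeroRunLen β n ≤ (C : ℕ∞)}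

/-- The waiting time W_n^β(x,y): first k ≥ 1 with T_β^k x in the n-th basic interval of y. -/
noncomputable def waitingTime (β x y : ℝ) (n : ℕ) : ℕ∞ :=
  sInf {k : ℕ∞ | ∃ m : ℕ, k = (m : ℕ∞) ∧ 1 ≤ m ∧
    ∀ i, i < n → betaDigit β ((betaT β)^[m] x) i = betaDigit β y i}

/-- (log W_n^β(x,y)) / n as an extended real, with value ⊤ when W_n = ∞. -/
noncomputable def waitingRatio (β x y : ℝ) (n : ℕ) : EReal :=
  if h : waitingTime β x y n = ⊤ then ⊤
  else (((Real.log ((waitingTime β x y n).untop h : ℕ)) / n : ℝ) : EReal)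

lemma betaT_mem (β x : ℝ) : betaT β x ∈ Set.Ico (0:ℝ) 1 := by
  refine ⟨?_, ?_⟩
  · have := Int.floor_le (β * x); simp only [betaT]; linarith
  · have := Int.lt_floor_add_one (β * x); simp only [betaT]; linarith

lemma betaT_iter_mem (β : ℝ) (n : ℕ) (x : ℝ) (hx : x ∈ Set.Ico (0:ℝ) 1) :
    (betaT β)^[n] x ∈ Set.Ico (0:ℝ) 1 := by
  cases n with
  | zero => simpa
  | succ n => rw [Function.iterate_succ_apply']; exact betaT_mem β _

lemma betaDigit_succ (β x : ℝ) (i : ℕ) :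
    betaDigit β x (i+1) = betaDigit β (betaT β x) i := by
  simp [betaDigit, Function.iterate_succ_apply]

lemma betaDigit_add (β x : ℝ) (n i : ℕ) :
    betaDigit β x (n + i) = betaDigit β ((betaT β)^[n] x) i := by
  simp [betaDigit, Nat.add_comm n i, Function.iterate_add_apply]

noncomputable def cylVal (β : ℝ) : List ℤ → ℝ
  | [] => 0
  | a :: w => ((a : ℝ) + cylVal β w) / β

lemma expand (β : ℝ) (hβ : 1 < β) (w : List ℤ) :
    ∀ x : ℝ, (∀ i (h : i < w.length), betaDigit β x i = w.get ⟨i, h⟩) →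
      x = cylVal β w + (1/β)^w.length * (betaT β)^[w.length] x := by
  induction w with
  | nil => intro x _; simp [cylVal]
  | cons a w ih =>
    intro x hx
    have hb : β ≠ 0 := by linarith
    have h0 : (⌊β * x⌋ : ℝ) = (a:ℝ) := by
      have := hx 0 (by simp)
      simp only [betaDigit, Function.iterate_zero, id_eq, List.get] at this
      exact_mod_cast this
    have hT : betaT β x = β * x - a := by rw [betaT, h0]
    have hdig : ∀ i (h : i < w.length), betaDigit β (betaT β x) i = w.get ⟨i, h⟩ := by
      intro i h
      have h2 := hx (i+1) (by simpa using Nat.succ_lt_succ h)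
      rw [betaDigit_succ] at h2
      simpa using h2
    have hih := ih (betaT β x) hdig
    have hx' : x = ((a:ℝ) + betaT β x) / β := by
      rw [hT]; field_simp; ring
    show x = ((a:ℝ) + cylVal β w)/β + (1/β)^(w.length+1) * (betaT β)^[w.length+1] x
    rw [Function.iterate_succ_apply]
    linear_combination hx' + hih / β

lemma cyl_subset (β : ℝ) (hβ : 1 < β) (w : List ℤ) :
    cylinder β w ⊆ Set.Ico (cylVal β w) (cylVal β w + (1/β)^w.length) := by
  rintro x ⟨hx01, hx⟩
  have hb : (0:ℝ) < β := lt_trans one_pos hβ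
  have hexp := expand β hβ w x hx
  have hT := betaT_iter_mem β w.length x hx01
  have hk : (0:ℝ) < (1/β)^w.length := by positivity
  constructor
  · nlinarith [hT.1, hT.2]
  · nlinarith [hT.1, hT.2]

lemma cyl_ordConn (β : ℝ) (hβ : 1 < β) (w : List ℤ) :
    ∀ x y z : ℝ, x ∈ cylinder β w → y ∈ cylinder β w → x ≤ z → z ≤ y →
      z ∈ cylinder β w := by
  induction w with
  | nil =>
    rintro x y z ⟨hx, _⟩ ⟨hy, _⟩ hxz hzy
    exact ⟨⟨le_trans hx.1 hxz, lt_of_le_of_lt hzy hy.2⟩, by simp⟩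
  | cons a w ih =>
    rintro x y z ⟨hx01, hx⟩ ⟨hy01, hy⟩ hxz hzy
    have hb : (0:ℝ) < β := lt_trans one_pos hβ
    have hx0 : ⌊β * x⌋ = a := by
      have := hx 0 (by simp)
      simpa [betaDigit] using this
    have hy0 : ⌊β * y⌋ = a := by
      have := hy 0 (by simp)
      simpa [betaDigit] using this
    have hz0 : ⌊β * z⌋ = a := by
      have h1 : ⌊β * x⌋ ≤ ⌊β * z⌋ := Int.floor_le_floor (by nlinarith)
      have h2 : ⌊β * z⌋ ≤ ⌊β * y⌋ := Int.floor_le_floor (by nlinarith)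
      omega
    have hxd : ∀ i (h : i < w.length), betaDigit β (betaT β x) i = w.get ⟨i, h⟩ := by
      intro i h
      have h2 := hx (i+1) (by simpa using Nat.succ_lt_succ h)
      rw [betaDigit_succ] at h2; simpa using h2
    have hyd : ∀ i (h : i < w.length), betaDigit β (betaT β y) i = w.get ⟨i, h⟩ := by
      intro i h
      have h2 := hy (i+1) (by simpa using Nat.succ_lt_succ h)
      rw [betaDigit_succ] at h2; simpa using h2
    have hTz : betaT β (z) ∈ cylinder β w := by
      apply ih (betaT β x) (betaT β y) (betaT β z)
        ⟨betaT_mem β x, hxd⟩ ⟨betaT_mem β y, hyd⟩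
      · show β * x - ⌊β * x⌋ ≤ β * z - ⌊β * z⌋
        rw [hx0, hz0]; nlinarith
      · show β * z - ⌊β * z⌋ ≤ β * y - ⌊β * y⌋
        rw [hy0, hz0]; nlinarith
    refine ⟨⟨le_trans hx01.1 hxz, lt_of_le_of_lt hzy hy01.2⟩, ?_⟩
    intro i h
    match i with
    | 0 => simpa [betaDigit] using hz0
    | (i+1) =>
      rw [betaDigit_succ]
      have := hTz.2 i (by simpa using Nat.lt_of_succ_lt_succ h)
      simpa using this
lemma full_Ioo (β : ℝ) (hβ : 1 < β) (w : List ℤ) (hf : IsFull β w) :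
    Set.Ioo (cylVal β w) (cylVal β w + (1/β)^w.length) ⊆ cylinder β w := by
  intro z hz
  by_contra hzc
  have hb : (0:ℝ) < β := lt_trans one_pos hβ
  have hk : (0:ℝ) < (1/β)^w.length := by positivity
  have hvol : volume (cylinder β w) = ENNReal.ofReal ((1/β)^w.length) := by
    rw [hf, one_div_pow]
  by_cases h : ∃ x ∈ cylinder β w, x ≤ z
  · obtain ⟨x, hx, hxz⟩ := h
    have hall : ∀ y ∈ cylinder β w, y < z := by
      intro y hy
      by_contra hyz
      exact hzc (cyl_ordConn β hβ w x y z hx hy hxz (le_of_not_gt hyz))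
    have hsub : cylinder β w ⊆ Set.Ico (cylVal β w) z :=
      fun t ht => ⟨(cyl_subset β hβ w ht).1, hall t ht⟩
    have h1 : volume (cylinder β w) ≤ ENNReal.ofReal (z - cylVal β w) := by
      calc volume (cylinder β w) ≤ volume (Set.Ico (cylVal β w) z) := measure_mono hsub
        _ = ENNReal.ofReal (z - cylVal β w) := Real.volume_Ico
    rw [hvol] at h1
    have h2 : ENNReal.ofReal (z - cylVal β w) < ENNReal.ofReal ((1/β)^w.length) := by
      rw [ENNReal.ofReal_lt_ofReal_iff hk]
      linarith [hz.2]
    exact absurd (lt_of_le_of_lt h1 h2) (lt_irrefl _)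
  · push_neg at h
    have hsub : cylinder β w ⊆ Set.Ico z (cylVal β w + (1/β)^w.length) :=
      fun t ht => ⟨le_of_lt (h t ht), (cyl_subset β hβ w ht).2⟩
    have h1 : volume (cylinder β w) ≤ ENNReal.ofReal (cylVal β w + (1/β)^w.length - z) := by
      calc volume (cylinder β w) ≤ volume (Set.Ico z (cylVal β w + (1/β)^w.length)) :=
            measure_mono hsub
        _ = _ := Real.volume_Ico
    rw [hvol] at h1
    have h2 : ENNReal.ofReal (cylVal β w + (1/β)^w.length - z) <
        ENNReal.ofReal ((1/β)^w.length) := by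
      rw [ENNReal.ofReal_lt_ofReal_iff hk]
      linarith [hz.1]
    exact absurd (lt_of_le_of_lt h1 h2) (lt_irrefl _)

lemma Ioo_subset_Ico01 {a b : ℝ} (hab : a < b) (h : Set.Ioo a b ⊆ Set.Ico 0 1) :
    0 ≤ a ∧ b ≤ 1 := by
  have hm : (a + b)/2 ∈ Set.Ico (0:ℝ) 1 := h ⟨by linarith, by linarith⟩
  constructor
  · by_contra h0
    push_neg at h0
    rcases le_or_gt b 0 with hb0 | hb0
    · have := (h ⟨show a < (a+b)/2 by linarith, by linarith⟩).1
      linarith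
    · have := (h ⟨show a < a/2 by linarith, by linarith⟩).1
      linarith
  · by_contra h1
    push_neg at h1
    rcases le_or_gt a 1 with ha1 | ha1
    · have := (h ⟨show a < (1+b)/2 by linarith, by linarith⟩).2
      linarith
    · have := hm.2
      linarith


/-- The concatenation of two full basic intervals is full. -/
theorem full_concat (β : ℝ) (hβ : 1 < β) (w η : List ℤ)
    (hw : IsAdmissibleWord β w) (hη : IsAdmissibleWord β η)
    (hwf : IsFull β w) (hηf : IsFull β η) :
    IsFull β (w ++ η) := by
  have hb : (0:ℝ) < β := lt_trans one_pos hβ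
  set n := w.length with hn
  set m := η.length with hm
  set c := cylVal β w with hc
  set k := (1/β)^n with hkdef
  set aη := cylVal β η with haηdef
  have hk : (0:ℝ) < k := by rw [hkdef]; positivity
  have hkm : (0:ℝ) < (1/β)^m := by positivity
  have hIη := full_Ioo β hβ η hηf
  have hIooIco : Set.Ioo aη (aη + (1/β)^m) ⊆ Set.Ico (0:ℝ) 1 :=
    fun t ht => (hIη ht).1
  obtain ⟨haη, hbη⟩ := Ioo_subset_Ico01 (by linarith) hIooIco
  have hkey : Set.Ioo (c + k*aη) (c + k*(aη + (1/β)^m)) ⊆ cylinder β (w ++ η) := by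
    intro x hx
    set y := (x - c)/k with hy
    have hxy : x = c + k*y := by rw [hy]; field_simp; ring
    have hyIoo : y ∈ Set.Ioo aη (aη + (1/β)^m) := by
      constructor
      · rw [hy, lt_div_iff₀ hk]; nlinarith [hx.1]
      · rw [hy, div_lt_iff₀ hk]; nlinarith [hx.2]
    have hycyl : y ∈ cylinder β η := hIη hyIoo
    have hxw : x ∈ cylinder β w := by
      apply full_Ioo β hβ w hwf
      constructor
      · have : (0:ℝ) < y := lt_of_le_of_lt haη hyIoo.1
        nlinarith
      · have : y < 1 := lt_of_lt_of_le hyIoo.2 hbη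
        nlinarith
    have hTx : (betaT β)^[n] x = y := by
      have hexp := expand β hβ w x hxw.2
      rw [← hn, ← hc] at hexp
      have h2 : k * (betaT β)^[n] x = k * y := by
        rw [hkdef]
        linarith [hxy, hexp]
      exact mul_left_cancel₀ (ne_of_gt hk) h2
    refine ⟨hxw.1, ?_⟩
    intro i h
    rcases lt_or_ge i n with hin | hin
    · have h1 := hxw.2 i hin
      rw [h1]
      simp only [List.get_eq_getElem]
      exact (List.getElem_append_left hin).symm
    · obtain ⟨j, rfl⟩ : ∃ j, i = n + j := ⟨i - n, by omega⟩
      rw [betaDigit_add, hTx]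
      have hjm : j < m := by
        have := h
        simp only [List.length_append, ← hn, ← hm] at this
        omega
      have h2 := hycyl.2 j hjm
      rw [h2]
      simp only [List.get_eq_getElem]
      rw [List.getElem_append_right (by omega)]
      congr 1
      omega
  have hlen : (w ++ η).length = n + m := by simp [List.length_append]; rfl
  have hval : k * (1/β)^m = 1 / β ^ (n + m) := by
    rw [hkdef, ← pow_add, one_div_pow]
  have hlow : ENNReal.ofReal (1 / β ^ (n+m)) ≤ volume (cylinder β (w ++ η)) := by
    calc ENNReal.ofReal (1 / β ^ (n+m))
        = volume (Set.Ioo (c + k*aη) (c + k*(aη + (1/β)^m))) := by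
          rw [Real.volume_Ioo]; congr 1; rw [← hval]; ring
      _ ≤ _ := measure_mono hkey
  have hup : volume (cylinder β (w ++ η)) ≤ ENNReal.ofReal (1 / β ^ (n+m)) := by
    calc volume (cylinder β (w ++ η))
        ≤ volume (Set.Ico (cylVal β (w++η)) (cylVal β (w++η) + (1/β)^(w++η).length)) :=
          measure_mono (cyl_subset β hβ _)
      _ = ENNReal.ofReal (1 / β ^ (n+m)) := by
          rw [Real.volume_Ico, hlen, ← hval, ← pow_add]; congr 1; ring
  rw [IsFull, hlen]
  exact le_antisymm hup hlow
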